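/- For a standard Cauchy likelihood-free setting, the product of two Cauchy densities x ↦ 1/((λ² + (x−m₁)²)(λ² + (x−m₂)²)) is bimodal (has two distinct local maxima) whenever |m₁ − m₂| > 2λ, and unimodal when |m₁ − m₂| ≤ 2λ. -/
import Mathlib


open Real

theorem stmt18 (lam m₁ m₂ : ℝ) (hlam : 0 < lam)
    (f : ℝ → ℝ)
    (hf : f = fun x => 1 / ((lam^2 + (x - m₁)^2) * (lam^2 + (x - m₂)^2))) :
    (|m₁ - m₂| > 2*lam → ∃ x y : ℝ, x ≠ y ∧ IsLocalMax f x ∧ IsLocalMax f y) ∧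
    (|m₁ - m₂| ≤ 2*lam → ∀ x y : ℝ, IsLocalMax f x → IsLocalMax f y → x = y) := by
  set c : ℝ := (m₁ + m₂) / 2 with hc
  set d : ℝ := (m₁ - m₂) / 2 with hd
  have key : ∀ z : ℝ, (lam^2 + (z - m₁)^2) * (lam^2 + (z - m₂)^2)
      = ((z - c)^2 + (lam^2 - d^2))^2 + 4*lam^2*d^2 := by
    intro z; rw [hc, hd]; ring
  have denom_pos : ∀ z : ℝ, 0 < (lam^2 + (z - m₁)^2) * (lam^2 + (z - m₂)^2) := by
    intro z; positivity
  constructor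
  · intro h
    have hsq : lam^2 < d^2 := by
      have h1 : (2*lam)^2 < |m₁ - m₂|^2 := by
        apply pow_lt_pow_left₀ h (by positivity) (by norm_num)
      rw [sq_abs] at h1
      rw [hd]; nlinarith
    set s : ℝ := Real.sqrt (d^2 - lam^2) with hs
    have hs2 : s^2 = d^2 - lam^2 := Real.sq_sqrt (by linarith)
    have hspos : 0 < s := Real.sqrt_pos.mpr (by linarith)
    have hdpos : 0 < 4*lam^2*d^2 := by
      have h0 : 0 < lam^2 := by positivity
      nlinarith
    have hmax : ∀ u : ℝ, (u - c)^2 = d^2 - lam^2 → IsLocalMax f u := by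
      intro u hu
      apply Filter.Eventually.of_forall
      intro z
      rw [hf]
      simp only
      have h1 : (lam^2 + (u - m₁)^2) * (lam^2 + (u - m₂)^2) = 4*lam^2*d^2 := by
        rw [key u, hu]; ring
      rw [h1]
      apply one_div_le_one_div_of_le hdpos
      rw [key z]; nlinarith [sq_nonneg ((z - c)^2 + (lam^2 - d^2))]
    refine ⟨c + s, c - s, ?_, hmax _ (by rw [show c + s - c = s by ring, hs2]),
      hmax _ (by rw [show c - s - c = -s by ring]; rw [neg_pow]; simp [hs2])⟩
    intro hxy
    have : s = 0 := by linarith [congrArg id hxy, (by linarith : c + s = c - s)]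
    linarith
  · intro h
    have hsq : d^2 ≤ lam^2 := by
      have h1 : |m₁ - m₂|^2 ≤ (2*lam)^2 := by
        apply pow_le_pow_left₀ (abs_nonneg _) h
      rw [sq_abs] at h1
      rw [hd]; nlinarith
    have mono : ∀ z₁ z₂ : ℝ, |z₁ - c| < |z₂ - c| → f z₂ < f z₁ := by
      intro z₁ z₂ hlt
      have h1 : (z₁ - c)^2 < (z₂ - c)^2 := by
        rw [← sq_abs (z₁ - c), ← sq_abs (z₂ - c)]
        exact pow_lt_pow_left₀ hlt (abs_nonneg _) (by norm_num)
      have ha : (0:ℝ) ≤ lam^2 - d^2 := by linarith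
      have h2 : ((z₁ - c)^2 + (lam^2 - d^2))^2 < ((z₂ - c)^2 + (lam^2 - d^2))^2 := by
        apply pow_lt_pow_left₀ (by linarith) (by positivity) (by norm_num)
      rw [hf]
      simp only
      apply one_div_lt_one_div_of_lt (denom_pos z₁)
      rw [key z₁, key z₂]; linarith
    have huniq : ∀ x : ℝ, IsLocalMax f x → x = c := by
      intro x hx
      by_contra hxc
      obtain ⟨ε, hε, hball⟩ := Metric.eventually_nhds_iff.mp hx
      rcases lt_or_gt_of_ne hxc with hlt | hgt
      · -- x < c
        set δ : ℝ := min (ε/2) ((c - x)/2) with hδ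
        have hδpos : 0 < δ := by
          apply lt_min (by linarith) (by linarith)
        have hδle1 : δ ≤ ε/2 := min_le_left _ _
        have hδle2 : δ ≤ (c - x)/2 := min_le_right _ _
        have hz := hball (y := x + δ) (by
          rw [Real.dist_eq]
          rw [show x + δ - x = δ by ring, abs_of_pos hδpos]; linarith)
        have : f (x + δ) < f (x + δ) := lt_of_le_of_lt hz (mono (x + δ) x (by
          rw [abs_of_neg (by linarith : x - c < 0),
            abs_of_neg (by linarith : x + δ - c < 0)]
          linarith))
        exact absurd this (lt_irrefl _)
      · -- c < x
        set δ : ℝ := min (ε/2) ((x - c)/2) with hδ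
        have hδpos : 0 < δ := by
          apply lt_min (by linarith) (by linarith)
        have hδle1 : δ ≤ ε/2 := min_le_left _ _
        have hδle2 : δ ≤ (x - c)/2 := min_le_right _ _
        have hz := hball (y := x - δ) (by
          rw [Real.dist_eq]
          rw [show x - δ - x = -δ by ring, abs_neg, abs_of_pos hδpos]; linarith)
        have : f (x - δ) < f (x - δ) := lt_of_le_of_lt hz (mono (x - δ) x (by
          rw [abs_of_pos (by linarith : 0 < x - c),
            abs_of_pos (by linarith : 0 < x - δ - c)]
          linarith))
        exact absurd this (lt_irrefl _)
    intro x y hx hy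
    rw [huniq x hx, huniq y hy]
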